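/- Let n ≥ 2 and let λ ∈ ℝⁿ satisfy μᵢ = Σ_{j≠i} λⱼ > 0 for all i and Σᵢ log μᵢ = ψ. Then Σᵢ fᵢ(λ) ≥ n^{(n-2)/(n-1)} (Σᵢ λᵢ)^{1/(n-1)} e^{-ψ/(n-1)}, where fᵢ(λ) = Σ_{j≠i} 1/μⱼ. -/

import Mathlib

/-!
Put μᵢ = Σ_{j≠i} λⱼ. Then Σᵢ fᵢ = (n - 1) Σᵢ 1/μᵢ, Σᵢ μᵢ = (n - 1) Σᵢ λᵢ and ∏ᵢ μᵢ = e^ψ.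
For xᵢ = 1/μᵢ the elementary symmetric function e_{n-1}(x) equals Σμ/∏μ, so Maclaurin's
inequality e_{n-1}(x)/n ≤ (e_1(x)/n)^{n-1} is exactly (Σ 1/μ)^{n-1} ≥ n^{n-2} Σμ/∏μ.
That case of Maclaurin's inequality is proved by induction on n, using AM-GM twice in each step.
-/

open Finset

theorem Finset.sum_sum_erase {ι R : Type*} [DecidableEq ι] [CommRing R] (s : Finset ι)
    (f : ι → R) :
    ∑ i ∈ s, ∑ j ∈ s.erase i, f j = (#s - 1 : R) * ∑ i ∈ s, f i := by
  rw [sum_congr rfl fun i hi => sum_erase_eq_sub hi, sum_sub_distrib, sum_const, nsmul_eq_mul]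
  ring

theorem Finset.sum_prod_erase_insert {ι R : Type*} [DecidableEq ι] [CommSemiring R]
    {s : Finset ι} {a : ι} (ha : a ∉ s) (x : ι → R) :
    ∑ i ∈ insert a s, ∏ j ∈ (insert a s).erase i, x j
      = ∏ j ∈ s, x j + x a * ∑ i ∈ s, ∏ j ∈ s.erase i, x j := by
  rw [sum_insert ha, erase_insert ha, mul_sum]
  congr 1
  refine sum_congr rfl fun i hi => ?_
  rw [erase_insert_of_ne (ne_of_mem_of_not_mem hi ha).symm, prod_insert (by simp [ha])]

theorem Finset.sum_prod_erase_inv {ι K : Type*} [DecidableEq ι] [Field K] (s : Finset ι)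
    (x : ι → K) (hx : ∀ i ∈ s, x i ≠ 0) :
    ∑ i ∈ s, ∏ j ∈ s.erase i, (x j)⁻¹ = (∑ i ∈ s, x i) / ∏ i ∈ s, x i := by
  rw [sum_div]
  refine sum_congr rfl fun i hi => ?_
  rw [← prod_erase_mul s x hi, prod_inv_distrib]
  field_simp [hx i hi]

namespace Real

theorem prod_le_arith_mean_pow {ι : Type*} (s : Finset ι) (x : ι → ℝ)
    (hx : ∀ i ∈ s, 0 ≤ x i) :
    ∏ i ∈ s, x i ≤ ((∑ i ∈ s, x i) / #s) ^ #s := by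
  rcases s.eq_empty_or_nonempty with rfl | hs
  · simp
  have hgm := geom_mean_le_arith_mean s (fun _ => 1) x (fun _ _ => zero_le_one)
    (by simpa using hs.card_pos) hx
  simp only [rpow_one, sum_const, nsmul_eq_mul, mul_one, one_mul] at hgm
  calc ∏ i ∈ s, x i = ((∏ i ∈ s, x i) ^ ((#s : ℝ)⁻¹)) ^ #s :=
        (rpow_inv_natCast_pow (prod_nonneg hx) hs.card_pos.ne').symm
    _ ≤ _ := pow_le_pow_left₀ (rpow_nonneg (prod_nonneg hx) _) hgm _

theorem pow_mul_le_arith_mean_pow {a b : ℝ} (ha : 0 ≤ a) (hb : 0 ≤ b) (k : ℕ) :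
    a ^ k * b ≤ ((k * a + b) / (k + 1)) ^ (k + 1) := by
  have h := prod_le_arith_mean_pow univ (Fin.lastCases b fun _ : Fin k => a)
    (fun i _ => by induction i using Fin.lastCases <;> simp [ha, hb])
  simpa [Fin.prod_univ_castSucc, Fin.sum_univ_castSucc] using h

theorem sum_prod_erase_le {ι : Type*} [DecidableEq ι] (s : Finset ι) (x : ι → ℝ)
    (hx : ∀ i ∈ s, 0 ≤ x i) :
    ∑ i ∈ s, ∏ j ∈ s.erase i, x j ≤ #s * ((∑ i ∈ s, x i) / #s) ^ (#s - 1) := by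
  induction s using Finset.induction_on with
  | empty => simp
  | @insert a s ha ih =>
    have hx' : ∀ i ∈ s, 0 ≤ x i := fun i hi => hx i (mem_insert_of_mem hi)
    have hxa : 0 ≤ x a := hx a (mem_insert_self a s)
    have hP := prod_le_arith_mean_pow s x hx'
    specialize ih hx'
    rw [sum_prod_erase_insert ha, sum_insert ha, card_insert_of_notMem ha]
    rcases hcard : #s with _ | k
    · simp [card_eq_zero.mp hcard]
    rw [hcard] at hP ih
    set S := ∑ i ∈ s, x i
    set u := S / (k + 1 : ℕ) with hu
    have hu0 : 0 ≤ u := div_nonneg (sum_nonneg hx') (Nat.cast_nonneg _)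
    -- AM-GM for `k` copies of `(k + 2) u` and one of `u + (k + 1) x a`, whose mean is `x a + S`
    have hmean : ((k : ℝ) * ((k + 2) * u) + (u + (k + 1) * x a)) / (k + 1) = x a + S := by
      rw [hu]; push_cast; field_simp; ring
    have hamgm := pow_mul_le_arith_mean_pow (by positivity : 0 ≤ ((k : ℝ) + 2) * u)
      (by positivity : 0 ≤ u + (k + 1) * x a) k
    rw [hmean] at hamgm
    calc ∏ j ∈ s, x j + x a * ∑ i ∈ s, ∏ j ∈ s.erase i, x j
        ≤ u ^ (k + 1) + x a * ((k + 1 : ℕ) * u ^ k) := by gcongr; simpa using ih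
      _ = ((k + 2) * u) ^ k * (u + (k + 1) * x a) / (k + 2) ^ k := by
        rw [mul_pow]; field_simp; push_cast; ring
      _ ≤ (x a + S) ^ (k + 1) / (k + 2) ^ k := by gcongr
      _ = ((k + 1 + 1 : ℕ) : ℝ) * ((x a + S) / (k + 1 + 1 : ℕ)) ^ (k + 1 + 1 - 1) := by
        rw [Nat.add_sub_cancel, div_pow]; push_cast; field_simp; ring

theorem card_rpow_mul_rpow_le_sum_inv {ι : Type*} (s : Finset ι) (hs : 2 ≤ #s) (μ : ι → ℝ)
    (hμ : ∀ i ∈ s, 0 < μ i) :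
    (#s : ℝ) ^ ((#s - 2 : ℝ) / (#s - 1)) * ((∑ i ∈ s, μ i) / ∏ i ∈ s, μ i) ^ (1 / (#s - 1 : ℝ))
      ≤ ∑ i ∈ s, (μ i)⁻¹ := by
  classical
  obtain ⟨k, hk⟩ : ∃ k, #s = k + 2 := ⟨#s - 2, by omega⟩
  set X := (∑ i ∈ s, μ i) / ∏ i ∈ s, μ i
  set T := ∑ i ∈ s, (μ i)⁻¹
  have hX : 0 ≤ X :=
    div_nonneg (sum_nonneg fun i hi => (hμ i hi).le) (prod_nonneg fun i hi => (hμ i hi).le)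
  have hT : 0 ≤ T := sum_nonneg fun i hi => inv_nonneg.mpr (hμ i hi).le
  have hmac : X ≤ (k + 2) * (T / (k + 2)) ^ (k + 1) := by
    have h := sum_prod_erase_le s (fun i => (μ i)⁻¹) fun i hi => inv_nonneg.mpr (hμ i hi).le
    rwa [sum_prod_erase_inv s μ fun i hi => (hμ i hi).ne', hk, show k + 2 - 1 = k + 1 by omega,
      Nat.cast_add, Nat.cast_ofNat] at h
  rw [hk, Nat.cast_add, Nat.cast_ofNat, add_sub_cancel_right,
    show (k : ℝ) + 2 - 1 = k + 1 by ring]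
  refine le_of_pow_le_pow_left₀ (n := k + 1) k.succ_ne_zero hT ?_
  have hk1 : (k : ℝ) + 1 ≠ 0 := by positivity
  calc ((k + 2 : ℝ) ^ ((k : ℝ) / (k + 1)) * X ^ (1 / ((k : ℝ) + 1))) ^ (k + 1)
      = (k + 2) ^ k * X := by
        rw [mul_pow, ← rpow_mul_natCast (by positivity), ← rpow_mul_natCast hX, Nat.cast_succ,
          div_mul_cancel₀ _ hk1, div_mul_cancel₀ _ hk1, rpow_one, rpow_natCast]
    _ ≤ T ^ (k + 1) := by
        have hpow : (k + 2 : ℝ) * (T / (k + 2)) ^ (k + 1) = T ^ (k + 1) / (k + 2) ^ k := by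
          rw [div_pow, pow_succ (k + 2 : ℝ)]; field_simp
        rwa [hpow, le_div_iff₀ (by positivity), mul_comm] at hmac

end Real

/-- If Σᵢ log μᵢ = ψ then Σᵢ fᵢ(λ) ≥ n^{(n-2)/(n-1)} (Σᵢ λᵢ)^{1/(n-1)} e^{-ψ/(n-1)}. -/
theorem stmt18 (n : ℕ) (hn : 2 ≤ n) (lam : Fin n → ℝ) (ψ : ℝ)
    (hμ : ∀ i : Fin n, 0 < ∑ j ∈ Finset.univ.erase i, lam j)
    (hψ : ∑ i : Fin n, Real.log (∑ j ∈ Finset.univ.erase i, lam j) = ψ) :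
    ∑ i : Fin n, ∑ j ∈ Finset.univ.erase i, (∑ k ∈ Finset.univ.erase j, lam k)⁻¹
      ≥ (n : ℝ) ^ (((n : ℝ) - 2) / ((n : ℝ) - 1)) *
          (∑ i : Fin n, lam i) ^ ((1 : ℝ) / ((n : ℝ) - 1)) *
          Real.exp (-ψ / ((n : ℝ) - 1)) := by
  set μ : Fin n → ℝ := fun i => ∑ j ∈ univ.erase i, lam j
  have hprod : ∏ i, μ i = Real.exp ψ := by
    rw [← hψ, Real.exp_sum]
    exact prod_congr rfl fun i _ => (Real.exp_log (hμ i)).symm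
  have hsum : ∑ i, μ i = (n - 1) * ∑ i, lam i := by
    simpa only [card_univ, Fintype.card_fin] using sum_sum_erase univ lam
  have hn1 : (1 : ℝ) ≤ n - 1 := by
    rw [le_sub_iff_add_le]; exact_mod_cast hn
  have hlam : 0 < ∑ i, lam i := by
    have : 0 < ∑ i, μ i := sum_pos (fun i _ => hμ i) (univ_nonempty_iff.mpr ⟨⟨0, by omega⟩⟩)
    rw [hsum] at this
    exact pos_of_mul_pos_right this (by linarith)
  have hNM := Real.card_rpow_mul_rpow_le_sum_inv univ (by simpa) μ fun i _ => hμ i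
  rw [card_univ, Fintype.card_fin, hprod, hsum] at hNM
  rw [ge_iff_le, show ∑ i, ∑ j ∈ univ.erase i, (μ j)⁻¹ = (n - 1) * ∑ i, (μ i)⁻¹ by
    simpa only [card_univ, Fintype.card_fin] using sum_sum_erase univ fun i => (μ i)⁻¹]
  calc (n : ℝ) ^ (((n : ℝ) - 2) / (n - 1)) * (∑ i, lam i) ^ (1 / ((n : ℝ) - 1)) *
          Real.exp (-ψ / (n - 1))
      = (n : ℝ) ^ (((n : ℝ) - 2) / (n - 1)) *
          ((∑ i, lam i) / Real.exp ψ) ^ (1 / ((n : ℝ) - 1)) := by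
        rw [Real.div_rpow hlam.le (Real.exp_pos ψ).le, ← Real.exp_mul, ← mul_div_assoc,
          div_eq_mul_inv _ (Real.exp _), ← Real.exp_neg]
        congr 2
        ring
    _ ≤ (n : ℝ) ^ (((n : ℝ) - 2) / (n - 1)) *
          ((n - 1) * (∑ i, lam i) / Real.exp ψ) ^ (1 / ((n : ℝ) - 1)) := by
        gcongr
        exact le_mul_of_one_le_left hlam.le hn1
    _ ≤ ∑ i, (μ i)⁻¹ := hNM
    _ ≤ (n - 1) * ∑ i, (μ i)⁻¹ :=
        le_mul_of_one_le_left (sum_nonneg fun i _ => (inv_pos.mpr (hμ i)).le) hn1
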